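/- Fix an integer k ≥ 2 and let W be a k × k row-stochastic, strictly positive, invertible matrix with image simplex Δ* ⊂ ℝ^k. Let ℓ = k − 1, |R| = k(k−1) (equal to 2·C(k,2)), and λ = μ_H^{k−1}(Δ*)/μ_H^{k−1}(Δ), the ratio of (k−1)-dimensional Hausdorff measures of Δ* and the full probability simplex Δ. Fix ε ∈ (0,1). Then there exist a constant θ ∈ ℝ and N₀ ∈ ℕ such that for every n ≥ N₀ there exist an integer M ≥ 1, probability vectors P₁,…,P_M ∈ Δ*, and a decoder g : (Fin k)^n → {1,…,M} with average error probability (1/M)·∑_{m=1}^M ℙ_{Y ∼ P_m^{⊗n}}[ g(Y) ≠ m ] ≤ ε and log₂ M ≥ ℓ·log₂( √n / (−ℓ·Φ⁻¹(ε/|R|)) ) + log₂ λ + θ. -/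

import Mathlib

open MeasureTheory

/-- Probability of the event `E ⊆ (Fin k)^n` under the `n`-fold product measure whose
coordinates are i.i.d. with common distribution `P` on `Fin k`. -/
noncomputable def prodProb {k : ℕ} (P : Fin k → ℝ) (n : ℕ) (E : Set (Fin n → Fin k)) : ℝ :=
  ∑ y : Fin n → Fin k, E.indicator (fun y => ∏ i, P (y i)) y

/-- The cumulative distribution function of the standard normal distribution. -/
noncomputable def stdNormalCDF (x : ℝ) : ℝ :=
  ∫ t in Set.Iic x, (Real.sqrt (2 * Real.pi))⁻¹ * Real.exp (-t ^ 2 / 2)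

/-- The inverse of the standard normal CDF. -/
noncomputable def stdNormalCDFInv : ℝ → ℝ :=
  Function.invFun stdNormalCDF

/-! The constant `θ` absorbs `log₂ λ` and the `Φ⁻¹` term, so what has to be shown is that codes
of size of order `n ^ (ℓ / 2)` with average error at most `ε` exist. As `W` is invertible, `Δ*`
contains a neighbourhood, inside the hyperplane `∑ f = 1`, of the image of the uniform
distribution. Put in it the grid of spacing `h = c / √n` in the first `ℓ` coordinates (the last
one is fixed by the sum), about `(a √n) ^ ℓ` points, and decode by rounding the empirical
frequencies of the first `ℓ` letters. By Chebyshev's inequality and a union bound, a codeword is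
misdecoded with probability at most `ℓ / (n (h / 2) ^ 2) = 4 ℓ / c ^ 2`, which is `ε` for
`c ^ 2 = 4 ℓ / ε`. -/

open Finset Matrix

lemma sum_prod_mul_prod {k n : ℕ} (P : Fin k → ℝ) (u : Fin n → Fin k → ℝ) :
    ∑ s : Fin n → Fin k, (∏ t, P (s t)) * ∏ t, u t (s t) = ∏ t, ∑ a, P a * u t a := by
  simp_rw [← prod_mul_distrib]
  exact (Fintype.prod_sum (fun t a => P a * u t a)).symm

lemma sum_prod_mul_sum_sq {k n : ℕ} {P : Fin k → ℝ} (hP1 : ∑ a, P a = 1) {g : Fin k → ℝ}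
    (hg : ∑ a, P a * g a = 0) :
    ∑ s : Fin n → Fin k, (∏ t, P (s t)) * (∑ i, g (s i)) ^ 2 = n * ∑ a, P a * g a ^ 2 := by
  -- the coordinates are independent, so a mixed moment factors, and for `i ≠ j` one factor is `0`
  have hpair (i j : Fin n) : ∑ s : Fin n → Fin k, (∏ t, P (s t)) * (g (s i) * g (s j)) =
      if i = j then ∑ a, P a * g a ^ 2 else 0 := by
    have hprod (s : Fin n → Fin k) : g (s i) * g (s j) =
        ∏ t, (if t = i then g (s t) else 1) * (if t = j then g (s t) else 1) := by
      rw [prod_mul_distrib, prod_ite_eq' univ i, prod_ite_eq' univ j]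
      simp
    simp_rw [hprod]
    rw [sum_prod_mul_prod P fun t a => (if t = i then g a else 1) * (if t = j then g a else 1)]
    split_ifs with hij
    · subst hij
      rw [prod_eq_single i (fun t _ ht => by simp [ht, hP1]) (by simp)]
      simp [sq]
    · exact prod_eq_zero (mem_univ i) (by simpa [hij] using hg)
  calc ∑ s : Fin n → Fin k, (∏ t, P (s t)) * (∑ i, g (s i)) ^ 2
      = ∑ i, ∑ j, ∑ s : Fin n → Fin k, (∏ t, P (s t)) * (g (s i) * g (s j)) := by
        simp_rw [sq, sum_mul_sum, mul_sum]
        rw [sum_comm]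
        exact sum_congr rfl fun i _ => sum_comm
    _ = n * ∑ a, P a * g a ^ 2 := by simp [hpair]

noncomputable def empiricalFreq {k n : ℕ} (s : Fin n → Fin k) (x : Fin k) : ℝ :=
  (∑ i, if s i = x then (1 : ℝ) else 0) / n

namespace prodProb

variable {k n : ℕ} {P : Fin k → ℝ}

lemma mono (hP : ∀ a, 0 ≤ P a) {E F : Set (Fin n → Fin k)} (h : E ⊆ F) :
    prodProb P n E ≤ prodProb P n F :=
  sum_le_sum fun s _ =>
    Set.indicator_le_indicator_of_subset h (fun y => prod_nonneg fun i _ => hP (y i)) s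

lemma iUnion_le {ι : Type*} [Fintype ι] (hP : ∀ a, 0 ≤ P a) (E : ι → Set (Fin n → Fin k)) :
    prodProb P n (⋃ j, E j) ≤ ∑ j, prodProb P n (E j) := by
  unfold prodProb
  rw [sum_comm]
  refine sum_le_sum fun s _ => ?_
  have hw : 0 ≤ ∏ i, P (s i) := prod_nonneg fun i _ => hP (s i)
  by_cases hs : s ∈ ⋃ j, E j
  · obtain ⟨j, hj⟩ := Set.mem_iUnion.mp hs
    rw [Set.indicator_of_mem hs, ← Set.indicator_of_mem hj (fun y => ∏ i, P (y i))]
    exact single_le_sum (f := fun j => (E j).indicator (fun y => ∏ i, P (y i)) s)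
      (fun j _ => Set.indicator_nonneg (fun _ _ => hw) s) (mem_univ j)
  · rw [Set.indicator_of_notMem hs]
    exact sum_nonneg fun j _ => Set.indicator_nonneg (fun _ _ => hw) s

lemma setOf_le_abs_sum_le (hP : P ∈ stdSimplex ℝ (Fin k)) {g : Fin k → ℝ}
    (hg : ∑ a, P a * g a = 0) {t : ℝ} (ht : 0 < t) :
    prodProb P n {s | t ≤ |∑ i, g (s i)|} ≤ n * (∑ a, P a * g a ^ 2) / t ^ 2 := by
  rw [← sum_prod_mul_sum_sq hP.2 hg, sum_div]
  refine sum_le_sum fun s _ => ?_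
  have hw : 0 ≤ ∏ i, P (s i) := prod_nonneg fun i _ => hP.1 (s i)
  by_cases hs : t ≤ |∑ i, g (s i)|
  · rw [Set.indicator_of_mem (show s ∈ {s | t ≤ |∑ i, g (s i)|} from hs), mul_div_assoc]
    refine le_mul_of_one_le_right hw ?_
    rw [one_le_div (by positivity), ← sq_abs (∑ i, g (s i))]
    exact pow_le_pow_left₀ ht.le hs 2
  · rw [Set.indicator_of_notMem (show s ∉ {s | t ≤ |∑ i, g (s i)|} from hs)]
    positivity

lemma setOf_le_abs_empiricalFreq_sub_le (hP : P ∈ stdSimplex ℝ (Fin k)) (hn : 0 < n)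
    (x : Fin k) {t : ℝ} (ht : 0 < t) :
    prodProb P n {s | t ≤ |empiricalFreq s x - P x|} ≤ 1 / (n * t ^ 2) := by
  have hnR : (0 : ℝ) < n := Nat.cast_pos.mpr hn
  set g : Fin k → ℝ := fun a => (if a = x then 1 else 0) - P x
  have hg : ∑ a, P a * g a = 0 := by
    simp [g, mul_sub, sum_sub_distrib, ← sum_mul, hP.2]
  have hg2 : ∑ a, P a * g a ^ 2 ≤ 1 := by
    obtain ⟨hx0, hx1⟩ := mem_Icc_of_mem_stdSimplex hP x
    calc ∑ a, P a * g a ^ 2 ≤ ∑ a, P a * 1 := by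
          refine sum_le_sum fun a _ => mul_le_mul_of_nonneg_left ?_ (hP.1 a)
          rw [sq_le_one_iff_abs_le_one, abs_le]
          simp only [g]
          constructor <;> split_ifs <;> linarith
      _ = 1 := by simp [hP.2]
  have hsum (s : Fin n → Fin k) : ∑ i, g (s i) = n * (empiricalFreq s x - P x) := by
    simp only [g, empiricalFreq, sum_sub_distrib, sum_const, card_univ, Fintype.card_fin,
      nsmul_eq_mul]
    field_simp
  have hsub : {s : Fin n → Fin k | t ≤ |empiricalFreq s x - P x|} ⊆
      {s | n * t ≤ |∑ i, g (s i)|} := by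
    intro s hs
    simp only [Set.mem_ofPred_eq, hsum, abs_mul, Nat.abs_cast] at hs ⊢
    exact mul_le_mul_of_nonneg_left hs hnR.le
  calc prodProb P n {s | t ≤ |empiricalFreq s x - P x|}
      ≤ n * (∑ a, P a * g a ^ 2) / (n * t) ^ 2 :=
        (mono hP.1 hsub).trans (setOf_le_abs_sum_le hP hg (by positivity))
    _ ≤ n * 1 / (n * t) ^ 2 := by gcongr
    _ = 1 / (n * t ^ 2) := by field_simp

lemma setOf_exists_le_abs_empiricalFreq_sub_le {ι : Type*} [Fintype ι]
    (hP : P ∈ stdSimplex ℝ (Fin k)) (hn : 0 < n) (x : ι → Fin k) {t : ℝ} (ht : 0 < t) :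
    prodProb P n {s | ∃ j, t ≤ |empiricalFreq s (x j) - P (x j)|} ≤
      Fintype.card ι / (n * t ^ 2) := by
  rw [Set.ofPred_exists]
  calc prodProb P n (⋃ j, {s | t ≤ |empiricalFreq s (x j) - P (x j)|})
      ≤ ∑ _j : ι, 1 / (n * t ^ 2) := (iUnion_le hP.1 _).trans <|
        sum_le_sum fun j _ => setOf_le_abs_empiricalFreq_sub_le hP hn (x j) ht
    _ = Fintype.card ι / (n * t ^ 2) := by simp [div_eq_mul_inv]

end prodProb

lemma exists_decoder {ι Y : Type*} [Nonempty ι] (near : ι → Y → Prop)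
    (huniq : ∀ y m m', near m y → near m' y → m = m') :
    ∃ g : Y → ι, ∀ m y, near m y → g y = m := by
  classical
  refine ⟨fun y => if h : ∃ m, near m y then h.choose else Classical.arbitrary ι,
    fun m y hm => ?_⟩
  have h : ∃ m, near m y := ⟨m, hm⟩
  simp only [dif_pos h]
  exact huniq y _ _ h.choose_spec hm

noncomputable def gridPoint {ℓ : ℕ} (f₀ : Fin (ℓ + 1) → ℝ) (h : ℝ) (v : Fin ℓ → ℕ) :
    Fin (ℓ + 1) → ℝ :=
  fun y => f₀ y + h * Fin.lastCases (-∑ j, (v j : ℝ)) (fun j => (v j : ℝ)) y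

section gridPoint

variable {ℓ : ℕ} (f₀ : Fin (ℓ + 1) → ℝ) (h : ℝ) (v : Fin ℓ → ℕ)

@[simp]
lemma gridPoint_castSucc (j : Fin ℓ) :
    gridPoint f₀ h v j.castSucc = f₀ j.castSucc + h * v j := by
  simp [gridPoint]

@[simp]
lemma gridPoint_last :
    gridPoint f₀ h v (Fin.last ℓ) = f₀ (Fin.last ℓ) - h * ∑ j, (v j : ℝ) := by
  simp [gridPoint, sub_eq_add_neg]

lemma sum_gridPoint : ∑ y, gridPoint f₀ h v y = ∑ y, f₀ y := by
  simp only [Fin.sum_univ_castSucc, gridPoint_castSucc, gridPoint_last, sum_add_distrib,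
    ← mul_sum]
  ring

lemma abs_gridPoint_sub_le {L : ℕ} (hh : 0 ≤ h) (hv : ∀ j, v j ≤ L) (y : Fin (ℓ + 1)) :
    |gridPoint f₀ h v y - f₀ y| ≤ h * ℓ * L := by
  have hvL (j : Fin ℓ) : (v j : ℝ) ≤ L := by exact_mod_cast hv j
  induction y using Fin.lastCases with
  | last =>
    have hsum : ∑ j, (v j : ℝ) ≤ ℓ * L := by
      simpa using sum_le_sum fun j (_ : j ∈ univ) => hvL j
    rw [gridPoint_last, sub_sub_cancel_left, abs_neg, abs_of_nonneg (by positivity), mul_assoc]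
    exact mul_le_mul_of_nonneg_left hsum hh
  | cast j =>
    have hℓ : (1 : ℝ) ≤ ℓ := by exact_mod_cast j.pos
    rw [gridPoint_castSucc, add_sub_cancel_left, abs_of_nonneg (by positivity), mul_assoc]
    exact mul_le_mul_of_nonneg_left
      ((hvL j).trans (le_mul_of_one_le_left (by positivity) hℓ)) hh

end gridPoint

lemma eq_of_abs_sub_gridPoint_lt {ℓ : ℕ} {f₀ : Fin (ℓ + 1) → ℝ} {h : ℝ} (hh : 0 < h)
    {v w : Fin ℓ → ℕ} {z : Fin ℓ → ℝ}
    (hv : ∀ j, |z j - gridPoint f₀ h v j.castSucc| < h / 2)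
    (hw : ∀ j, |z j - gridPoint f₀ h w j.castSucc| < h / 2) : v = w := by
  funext j
  have hj := add_lt_add (hw j) (hv j)
  rw [gridPoint_castSucc, gridPoint_castSucc, add_halves] at hj
  have hvw : |((v j : ℤ) - w j : ℤ)| < 1 := by
    have hdist : h * |(v j : ℝ) - w j| < h * 1 := by
      calc h * |(v j : ℝ) - w j|
          = |(z j - (f₀ j.castSucc + h * w j)) - (z j - (f₀ j.castSucc + h * v j))| := by
            rw [← abs_of_pos hh, ← abs_mul, abs_of_pos hh]
            congr 1
            ring
        _ < h * 1 := (abs_sub _ _).trans_lt (by linarith)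
    exact_mod_cast lt_of_mul_lt_mul_left hdist hh.le
  have := Int.abs_lt_one_iff.mp hvw
  omega

section stochastic

variable {ι : Type*} [Fintype ι]

lemma sum_vecMul_of_mulVec_one {A : Matrix ι ι ℝ} (hA : A *ᵥ 1 = 1) (f : ι → ℝ) :
    ∑ y, (f ᵥ* A) y = ∑ x, f x := by
  simpa [dotProduct_one, hA] using (dotProduct_mulVec f A 1).symm

variable [DecidableEq ι]

lemma vecMul_mem_stdSimplex {W : Matrix ι ι ℝ} (hW : W ∈ rowStochastic ℝ ι) {p : ι → ℝ}
    (hp : p ∈ stdSimplex ℝ ι) : p ᵥ* W ∈ stdSimplex ℝ ι :=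
  ⟨nonneg_vecMul_of_mem_rowStochastic hW hp.1, (sum_vecMul_of_mulVec_one hW.2 p).trans hp.2⟩

lemma exists_ball_subset_image_stdSimplex [Nonempty ι] {W : Matrix ι ι ℝ}
    (hrow : W *ᵥ 1 = 1) (hinv : W.det ≠ 0) :
    ∃ f₀ : ι → ℝ, ∑ y, f₀ y = 1 ∧ ∃ ρ > 0, ∀ f : ι → ℝ, ∑ y, f y = 1 →
      (∀ y, |f y - f₀ y| ≤ ρ) → f ∈ (· ᵥ* W) '' stdSimplex ℝ ι := by
  have hU : IsUnit W.det := isUnit_iff_ne_zero.mpr hinv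
  have hV : W⁻¹ *ᵥ 1 = 1 := by
    rw [← hrow, mulVec_mulVec, nonsing_inv_mul W hU, one_mulVec, hrow]
  set p₀ : ι → ℝ := fun _ => (Fintype.card ι : ℝ)⁻¹
  have hp₀ : ∑ x, p₀ x = 1 := by simp [p₀]
  set U : Set (ι → ℝ) := {f | ∀ x, 0 < (f ᵥ* W⁻¹) x}
  have hUopen : IsOpen U := by
    simp only [U, Set.ofPred_forall]
    exact isOpen_iInter_of_finite fun x =>
      isOpen_lt continuous_const
        ((continuous_apply x).comp (continuous_id.matrix_vecMul continuous_const))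
  have hf₀ : p₀ ᵥ* W ∈ U := by
    intro x
    rw [vecMul_vecMul, mul_nonsing_inv W hU, vecMul_one]
    simp [p₀, Fintype.card_pos]
  obtain ⟨r, hr, hball⟩ := Metric.isOpen_iff.mp hUopen _ hf₀
  refine ⟨p₀ ᵥ* W, (sum_vecMul_of_mulVec_one hrow p₀).trans hp₀, r / 2, half_pos hr,
    fun f hf hclose => ⟨f ᵥ* W⁻¹, ⟨fun x => ?_, ?_⟩, ?_⟩⟩
  · have hdist : dist f (p₀ ᵥ* W) < r :=
      ((dist_pi_le_iff (half_pos hr).le).mpr fun y =>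
        (Real.dist_eq _ _).trans_le (hclose y)).trans_lt (half_lt_self hr)
    exact (hball hdist x).le
  · rw [sum_vecMul_of_mulVec_one hV, hf]
  · simp only [vecMul_vecMul, nonsing_inv_mul W hU, vecMul_one]

end stochastic

lemma exists_grid_code {ℓ n L : ℕ} (hn : 0 < n) (hL : 0 < L) {S : Set (Fin (ℓ + 1) → ℝ)}
    (hS : S ⊆ stdSimplex ℝ (Fin (ℓ + 1))) {f₀ : Fin (ℓ + 1) → ℝ} (hf₀ : ∑ y, f₀ y = 1)
    {ρ h : ℝ} (hh : 0 < h)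
    (hball : ∀ f : Fin (ℓ + 1) → ℝ, ∑ y, f y = 1 → (∀ y, |f y - f₀ y| ≤ ρ) → f ∈ S)
    (hhL : h * ℓ * L ≤ ρ) :
    ∃ P : Fin (L ^ ℓ) → Fin (ℓ + 1) → ℝ, (∀ m, P m ∈ S) ∧
      ∃ g : (Fin n → Fin (ℓ + 1)) → Fin (L ^ ℓ),
        ∀ m, prodProb (P m) n {s | g s ≠ m} ≤ 4 * ℓ / (n * h ^ 2) := by
  set e : (Fin ℓ → Fin L) ≃ Fin (L ^ ℓ) := finFunctionFinEquiv
  set c : Fin (L ^ ℓ) → Fin (ℓ + 1) → ℝ := fun m => gridPoint f₀ h fun j => e.symm m j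
  have hcS (m) : c m ∈ S := hball _ (by rw [sum_gridPoint, hf₀]) fun y =>
    (abs_gridPoint_sub_le _ _ _ hh.le (fun j => (e.symm m j).is_lt.le) y).trans hhL
  have : Nonempty (Fin (L ^ ℓ)) := ⟨⟨0, pow_pos hL ℓ⟩⟩
  obtain ⟨g, hg⟩ := exists_decoder
    (fun m (s : Fin n → Fin (ℓ + 1)) =>
      ∀ j : Fin ℓ, |empiricalFreq s j.castSucc - c m j.castSucc| < h / 2)
    fun s m m' hm hm' => e.symm.injective <| funext fun j => Fin.ext <|
      congrFun (eq_of_abs_sub_gridPoint_lt hh hm hm') j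
  refine ⟨c, hcS, g, fun m => ?_⟩
  have hsub : {s | g s ≠ m} ⊆
      {s | ∃ j : Fin ℓ, h / 2 ≤ |empiricalFreq s j.castSucc - c m j.castSucc|} := by
    intro s hs
    rw [Set.mem_ofPred_eq]
    by_contra! hfar
    exact hs (hg m s hfar)
  calc prodProb (c m) n {s | g s ≠ m}
      ≤ Fintype.card (Fin ℓ) / (n * (h / 2) ^ 2) :=
        (prodProb.mono (hS (hcS m)).1 hsub).trans <|
          prodProb.setOf_exists_le_abs_empiricalFreq_sub_le (hS (hcS m)) hn _ (half_pos hh)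
    _ = 4 * ℓ / (n * h ^ 2) := by
      rw [Fintype.card_fin]
      field_simp
      ring

lemma one_div_mul_sum_le {M : ℕ} (hM : 0 < M) {a : Fin M → ℝ} {b : ℝ} (h : ∀ m, a m ≤ b) :
    1 / (M : ℝ) * ∑ m, a m ≤ b := by
  have hMR : (0 : ℝ) < M := Nat.cast_pos.mpr hM
  calc 1 / (M : ℝ) * ∑ m, a m ≤ 1 / M * (M * b) := by
        gcongr
        simpa using sum_le_sum fun m (_ : m ∈ univ) => h m
    _ = b := by field_simp

lemma exists_codes_logb_card_ge {ℓ : ℕ} (hℓ : 0 < ℓ) {S : Set (Fin (ℓ + 1) → ℝ)}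
    (hS : S ⊆ stdSimplex ℝ (Fin (ℓ + 1))) {f₀ : Fin (ℓ + 1) → ℝ} (hf₀ : ∑ y, f₀ y = 1)
    {ρ : ℝ} (hρ : 0 < ρ)
    (hball : ∀ f : Fin (ℓ + 1) → ℝ, ∑ y, f y = 1 → (∀ y, |f y - f₀ y| ≤ ρ) → f ∈ S)
    {ε : ℝ} (hε : 0 < ε) :
    ∃ C : ℝ, ∃ N₀ : ℕ, ∀ n, N₀ ≤ n → ∃ M : ℕ, 1 ≤ M ∧ ∃ P : Fin M → Fin (ℓ + 1) → ℝ,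
      (∀ m, P m ∈ S) ∧ ∃ g : (Fin n → Fin (ℓ + 1)) → Fin M,
        1 / (M : ℝ) * ∑ m, prodProb (P m) n {s | g s ≠ m} ≤ ε ∧
        ℓ * Real.logb 2 √n + C ≤ Real.logb 2 M := by
  have hℓR : (0 : ℝ) < ℓ := Nat.cast_pos.mpr hℓ
  set c := √(4 * ℓ / ε)
  have hc : 0 < c := Real.sqrt_pos.mpr (by positivity)
  have hc2 : c ^ 2 = 4 * ℓ / ε := Real.sq_sqrt (by positivity)
  set a := ρ / (ℓ * c)
  have ha : 0 < a := by positivity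
  refine ⟨ℓ * Real.logb 2 (a / 2), ⌈(2 / a) ^ 2⌉₊, fun n hn => ?_⟩
  have h2 : 2 ≤ a * √n := by
    have hsq : 2 / a ≤ √n :=
      Real.le_sqrt_of_sq_le ((Nat.le_ceil _).trans (by exact_mod_cast hn))
    rwa [div_le_iff₀ ha, mul_comm] at hsq
  have hsqrt : 0 < √(n : ℝ) := pos_of_mul_pos_right (by linarith) ha.le
  have hn0 : 0 < n := by exact_mod_cast Real.sqrt_pos.mp hsqrt
  set L := ⌊a * √n⌋₊
  have hLlow : a * √n / 2 ≤ L := by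
    have := Nat.lt_floor_add_one (a * √n)
    linarith
  have hL : 0 < L := Nat.floor_pos.mpr (by linarith)
  obtain ⟨P, hPS, g, hg⟩ := exists_grid_code hn0 hL hS hf₀ (h := c / √n) (by positivity) hball <|
    calc c / √n * ℓ * L ≤ c / √n * ℓ * (a * √n) := by
          gcongr
          exact Nat.floor_le (by positivity)
      _ = ρ := by
        simp only [a]
        field_simp
  refine ⟨L ^ ℓ, Nat.one_le_pow _ _ hL, P, hPS, g, one_div_mul_sum_le (pow_pos hL ℓ) fun m =>
    (hg m).trans_eq ?_, ?_⟩
  · rw [div_pow, Real.sq_sqrt (Nat.cast_nonneg n), hc2]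
    field_simp
  · rw [Nat.cast_pow, Real.logb_pow, ← mul_add, ← Real.logb_mul hsqrt.ne' (by positivity)]
    exact mul_le_mul_of_nonneg_left
      (Real.logb_le_logb_of_le one_lt_two (by positivity) (by linarith)) hℓR.le

lemma logb_div_le_logb_sub_logb {b x : ℝ} (hb : 1 < b) (hx : 1 ≤ x) (y : ℝ) :
    Real.logb b (x / y) ≤ Real.logb b x - Real.logb b y := by
  rcases eq_or_ne y 0 with rfl | hy
  · simpa using Real.logb_nonneg hb hx
  · rw [Real.logb_div (by positivity) hy]

theorem gaussian_approximation_dmc_general (k : ℕ) (hk : 2 ≤ k)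
    (W : Matrix (Fin k) (Fin k) ℝ)
    (hpos : ∀ x y, 0 < W x y) (hrow : ∀ x, ∑ y, W x y = 1) (hinv : W.det ≠ 0)
    (Δ : Set (EuclideanSpace ℝ (Fin k)))
    (hΔ : Δ = {f | (∀ i, 0 ≤ f i) ∧ ∑ i, f i = 1})
    (Δs : Set (EuclideanSpace ℝ (Fin k)))
    (hΔs : Δs = {f | ∃ p ∈ Δ, ∀ y, f y = ∑ x, p x * W x y})
    (lam : ℝ)
    (ε : ℝ) (hε0 : 0 < ε) :
    ∃ θ : ℝ, ∃ N₀ : ℕ, ∀ n : ℕ, N₀ ≤ n →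
      ∃ M : ℕ, 1 ≤ M ∧ ∃ P : Fin M → EuclideanSpace ℝ (Fin k),
        (∀ m, P m ∈ Δs) ∧
        ∃ g : (Fin n → Fin k) → Fin M,
          (1 / (M : ℝ)) * ∑ m : Fin M, prodProb (P m) n {y | g y ≠ m} ≤ ε ∧
          ((k : ℝ) - 1) * Real.logb 2 (Real.sqrt n
              / (-((k : ℝ) - 1) * stdNormalCDFInv (ε / ((k : ℝ) * ((k : ℝ) - 1)))))
            + Real.logb 2 lam + θ ≤ Real.logb 2 M := by
  obtain ⟨ℓ, rfl⟩ : ∃ ℓ, k = ℓ + 1 := ⟨k - 1, by omega⟩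
  have hW : W ∈ rowStochastic ℝ (Fin (ℓ + 1)) :=
    mem_rowStochastic_iff_sum.mpr ⟨fun x y => (hpos x y).le, hrow⟩
  obtain ⟨f₀, hf₀, ρ, hρ, hball⟩ := exists_ball_subset_image_stdSimplex hW.2 hinv
  obtain ⟨C, N₀, hcode⟩ := exists_codes_logb_card_ge (by omega)
    (by rintro _ ⟨p, hp, rfl⟩; exact vecMul_mem_stdSimplex hW hp) hf₀ hρ hball hε0
  have hℓ : ((ℓ + 1 : ℕ) : ℝ) - 1 = ℓ := by push_cast; ring
  simp only [hℓ]
  generalize -(ℓ : ℝ) * _ = q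
  refine ⟨C + ℓ * Real.logb 2 q - Real.logb 2 lam, max N₀ 1, fun n hn => ?_⟩
  obtain ⟨M, hM, P, hPS, g, herr, hlog⟩ := hcode n (le_of_max_le_left hn)
  refine ⟨M, hM, fun m => WithLp.toLp 2 (P m), fun m => ?_, g, herr, ?_⟩
  · obtain ⟨p, hp, hpP⟩ := hPS m
    rw [hΔs]
    exact ⟨WithLp.toLp 2 p, hΔ ▸ hp, fun y => by simp [← hpP, vecMul, dotProduct]⟩
  · have hsqrt : 1 ≤ √(n : ℝ) := Real.one_le_sqrt.mpr (by exact_mod_cast le_of_max_le_right hn)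
    have hdiv := mul_le_mul_of_nonneg_left (logb_div_le_logb_sub_logb one_lt_two hsqrt q)
      (Nat.cast_nonneg ℓ)
    linarith

/-- Gaussian approximation of the achievable code size for noisy
permutation channels with a strictly positive, row-stochastic, invertible matrix `W`:
with `ℓ = k−1`, `|R| = k(k−1)` and `λ` the Hausdorff volume ratio of `Δ*` and `Δ`,
there are `θ ∈ ℝ` and `N₀` such that for all `n ≥ N₀` some code of size `M` with
marginals in `Δ*` has average error at most `ε` and
`log₂ M ≥ ℓ·log₂(√n/(−ℓ·Φ⁻¹(ε/|R|))) + log₂ λ + θ`. -/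
theorem gaussian_approximation_dmc (k : ℕ) (hk : 2 ≤ k)
    (W : Matrix (Fin k) (Fin k) ℝ)
    (hpos : ∀ x y, 0 < W x y) (hrow : ∀ x, ∑ y, W x y = 1) (hinv : W.det ≠ 0)
    (Δ : Set (EuclideanSpace ℝ (Fin k)))
    (hΔ : Δ = {f | (∀ i, 0 ≤ f i) ∧ ∑ i, f i = 1})
    (Δs : Set (EuclideanSpace ℝ (Fin k)))
    (hΔs : Δs = {f | ∃ p ∈ Δ, ∀ y, f y = ∑ x, p x * W x y})
    (lam : ℝ)
    (hlam : lam = (μH[(k : ℝ) - 1] Δs).toReal / (μH[(k : ℝ) - 1] Δ).toReal)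
    (ε : ℝ) (hε0 : 0 < ε) (hε1 : ε < 1) :
    ∃ θ : ℝ, ∃ N₀ : ℕ, ∀ n : ℕ, N₀ ≤ n →
      ∃ M : ℕ, 1 ≤ M ∧ ∃ P : Fin M → EuclideanSpace ℝ (Fin k),
        (∀ m, P m ∈ Δs) ∧
        ∃ g : (Fin n → Fin k) → Fin M,
          (1 / (M : ℝ)) * ∑ m : Fin M, prodProb (P m) n {y | g y ≠ m} ≤ ε ∧
          ((k : ℝ) - 1) * Real.logb 2 (Real.sqrt n
              / (-((k : ℝ) - 1) * stdNormalCDFInv (ε / ((k : ℝ) * ((k : ℝ) - 1)))))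
            + Real.logb 2 lam + θ ≤ Real.logb 2 M :=
  gaussian_approximation_dmc_general k hk W hpos hrow hinv Δ hΔ Δs hΔs lam ε hε0
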